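/- Let σ : ℝ → ℝ be strictly monotonic with inverse σ⁻¹, and let f : ℝⁿ → ℝ. Suppose f(x) = σ(f₁(x₋ᵢ) + f₂(x₋ⱼ)) for functions f₁, f₂, where σ⁻¹, f, f₁, f₂ are twice differentiable. Then for all x ∈ ℝⁿ: (σ⁻¹)''(f(x))·(∂f/∂xᵢ)(x)·(∂f/∂xⱼ)(x) + (σ⁻¹)'(f(x))·(∂²f/∂xᵢ∂xⱼ)(x) = 0. -/

import Mathlib

/-- Partial derivative of `f` in coordinate `i` at `x`. -/
noncomputable def pd {n : ℕ} (i : Fin n) (f : (Fin n → ℝ) → ℝ) (x : Fin n → ℝ) : ℝ :=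
  deriv (fun t => f (Function.update x i t)) (x i)

/-- Mixed second partial derivative ∂²f/∂xᵢ∂xⱼ at `x`. -/
noncomputable def pd2 {n : ℕ} (i j : Fin n) (f : (Fin n → ℝ) → ℝ) (x : Fin n → ℝ) : ℝ :=
  pd j (fun y => pd i f y) x

/-- `f` does not depend on coordinate `i`. -/
def IndepOf {n : ℕ} (i : Fin n) (f : (Fin n → ℝ) → ℝ) : Prop :=
  ∀ x t, f (Function.update x i t) = f x

lemma myHasDerivAt_update {n : ℕ} (x : Fin n → ℝ) (i : Fin n) (t : ℝ) :
    HasDerivAt (fun s : ℝ => Function.update x i s) (Pi.single i (1:ℝ)) t := by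
  have heq : (fun s : ℝ => Function.update x i s)
      = fun s : ℝ => x + (s - x i) • (Pi.single i 1 : Fin n → ℝ) := by
    funext s; funext k
    by_cases h : k = i
    · subst h; simp
    · simp [Function.update_of_ne h, Pi.single_apply, h]
  rw [heq]
  have h := (((hasDerivAt_id t).sub_const (x i)).smul_const (Pi.single i (1:ℝ))).const_add x
  simpa using h

lemma hasDerivAt_comp_update {n : ℕ} {g : (Fin n → ℝ) → ℝ} (hg : Differentiable ℝ g)
    (x : Fin n → ℝ) (i : Fin n) (t : ℝ) :
    HasDerivAt (fun s => g (Function.update x i s))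
      (fderiv ℝ g (Function.update x i t) (Pi.single i 1)) t :=
  (hg _).hasFDerivAt.comp_hasDerivAt t (myHasDerivAt_update x i t)

lemma pd_eq_fderiv {n : ℕ} {g : (Fin n → ℝ) → ℝ} (hg : Differentiable ℝ g)
    (i : Fin n) (x : Fin n → ℝ) : pd i g x = fderiv ℝ g x (Pi.single i 1) := by
  have h := hasDerivAt_comp_update hg x i (x i)
  rw [Function.update_eq_self] at h
  simp only [pd]
  exact h.deriv

lemma pd_zero_of_indep {n : ℕ} {h : (Fin n → ℝ) → ℝ} {j : Fin n}
    (hh : IndepOf j h) (x : Fin n → ℝ) : pd j h x = 0 := by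
  simp only [pd]
  have : (fun t => h (Function.update x j t)) = fun _ => h x := funext fun t => hh x t
  rw [this, deriv_const]

/-- 'Only if' direction of the σ-separability lemma, via the chain-rule expansion of
∂²(σ⁻¹∘f)/∂xᵢ∂xⱼ: if `f = σ(f₁ + f₂)` with `f₁` independent of `xᵢ` and `f₂`
independent of `xⱼ`, then
`(σ⁻¹)''(f x)·∂f/∂xᵢ(x)·∂f/∂xⱼ(x) + (σ⁻¹)'(f x)·∂²f/∂xᵢ∂xⱼ(x) = 0` for all `x`. -/
theorem chain_rule_mixed_partial_vanishes_of_separable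
    {n : ℕ} (σ σinv : ℝ → ℝ) (f f₁ f₂ : (Fin n → ℝ) → ℝ) (i j : Fin n) (hij : i ≠ j)
    (hmono : StrictMono σ ∨ StrictAnti σ)
    (hleft : Function.LeftInverse σinv σ) (hright : Function.RightInverse σinv σ)
    (hσinv : ContDiff ℝ 2 σinv) (hf : ContDiff ℝ 2 f)
    (hf₁ : ContDiff ℝ 2 f₁) (hf₂ : ContDiff ℝ 2 f₂)
    (hindep₁ : IndepOf i f₁) (hindep₂ : IndepOf j f₂)
    (hform : ∀ x, f x = σ (f₁ x + f₂ x)) :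
    ∀ x, deriv (deriv σinv) (f x) * pd i f x * pd j f x
        + deriv σinv (f x) * pd2 i j f x = 0 := by
  intro x
  have hdf : Differentiable ℝ f := hf.differentiable two_ne_zero
  have hdσinv : Differentiable ℝ σinv := hσinv.differentiable two_ne_zero
  have hσinv' : ContDiff ℝ ((1:ℕ) + 1) σinv := by exact_mod_cast hσinv
  have hdσinv' : Differentiable ℝ (deriv σinv) :=
    (contDiff_succ_iff_deriv.mp hσinv').2.2.differentiable (by simp)
  have hf' : ContDiff ℝ ((1:ℕ) + 1) f := by exact_mod_cast hf
  have hdfd : Differentiable ℝ (fderiv ℝ f) :=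
    (contDiff_succ_iff_fderiv.mp hf').2.2.differentiable (by simp)
  set g : (Fin n → ℝ) → ℝ := fun y => σinv (f y) with hg
  have hg12 : ∀ y, g y = f₁ y + f₂ y := fun y => by
    rw [hg]; simp only []; rw [hform]; exact hleft _
  -- Step 1: pd2 i j g x = 0
  have hpdig : ∀ y, pd i g y = pd i f₂ y := by
    intro y
    simp only [pd]
    have heq : (fun t => g (Function.update y i t))
        = fun t => f₁ y + f₂ (Function.update y i t) := by
      funext t; rw [hg12, hindep₁]
    rw [heq, deriv_const_add]
  have hindep_pd : IndepOf j (pd i f₂) := by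
    intro y t
    simp only [pd]
    have h1 : (Function.update y j t) i = y i := Function.update_of_ne hij t y
    have h2 : (fun s => f₂ (Function.update (Function.update y j t) i s))
        = fun s => f₂ (Function.update y i s) := by
      funext s
      rw [Function.update_comm hij.symm, hindep₂]
    rw [h1, h2]
  have hstep1 : pd2 i j g x = 0 := by
    have heq : (fun y => pd i g y) = pd i f₂ := funext hpdig
    simp only [pd2]
    rw [heq]
    exact pd_zero_of_indep hindep_pd x
  -- Step 2: chain rule expansion of pd2 i j g x
  have hpdf : ∀ (k : Fin n) (y : Fin n → ℝ), pd k f y = fderiv ℝ f y (Pi.single k 1) :=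
    fun k y => pd_eq_fderiv hdf k y
  have hcurve : ∀ (k : Fin n) (y : Fin n → ℝ),
      HasDerivAt (fun s => f (Function.update y k s)) (pd k f y) (y k) := by
    intro k y
    have h := hasDerivAt_comp_update hdf y k (y k)
    rw [Function.update_eq_self] at h
    rw [hpdf]; exact h
  have hpdg : ∀ y, pd i g y = deriv σinv (f y) * pd i f y := by
    intro y
    have hcomp := HasDerivAt.comp (y i)
      (show HasDerivAt σinv (deriv σinv (f y)) (f (Function.update y i (y i))) by
        rw [Function.update_eq_self]; exact (hdσinv (f y)).hasDerivAt) (hcurve i y)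
    simp only [pd]
    simpa [Function.comp_def, hg, pd] using hcomp.deriv
  have hA : HasDerivAt (fun t => deriv σinv (f (Function.update x j t)))
      (deriv (deriv σinv) (f x) * pd j f x) (x j) := by
    have hcomp := HasDerivAt.comp (x j)
      (show HasDerivAt (deriv σinv) (deriv (deriv σinv) (f x)) (f (Function.update x j (x j))) by
        rw [Function.update_eq_self]; exact (hdσinv' (f x)).hasDerivAt) (hcurve j x)
    simpa [Function.comp_def] using hcomp
  have hD : HasDerivAt (fun t => fderiv ℝ f (Function.update x j t))
      (fderiv ℝ (fderiv ℝ f) x (Pi.single j 1)) (x j) := by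
    have h := (hdfd (Function.update x j (x j))).hasFDerivAt.comp_hasDerivAt (x j)
      (myHasDerivAt_update x j (x j))
    rw [Function.update_eq_self] at h
    exact h
  have hD2 : HasDerivAt (fun t => fderiv ℝ f (Function.update x j t) (Pi.single i 1))
      (fderiv ℝ (fderiv ℝ f) x (Pi.single j 1) (Pi.single i 1)) (x j) := by
    have h := hD.clm_apply (hasDerivAt_const (x j) (Pi.single i (1:ℝ)))
    simpa using h
  have heqi : (fun y => pd i f y) = fun y => fderiv ℝ f y (Pi.single i 1) :=
    funext fun y => hpdf i y
  have hval : pd2 i j f x = fderiv ℝ (fderiv ℝ f) x (Pi.single j 1) (Pi.single i 1) := by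
    simp only [pd2]
    rw [heqi]
    simp only [pd]
    exact hD2.deriv
  have hB : HasDerivAt (fun t => pd i f (Function.update x j t)) (pd2 i j f x) (x j) := by
    rw [hval]
    have heq2 : (fun t => pd i f (Function.update x j t))
        = fun t => fderiv ℝ f (Function.update x j t) (Pi.single i 1) := by
      funext t; rw [hpdf]
    rw [heq2]
    exact hD2
  have hmul := hA.mul hB
  rw [Function.update_eq_self] at hmul
  have hfinal : pd2 i j g x
      = deriv (deriv σinv) (f x) * pd j f x * pd i f x
        + deriv σinv (f x) * pd2 i j f x := by
    have heqg : (fun y => pd i g y) = fun y => deriv σinv (f y) * pd i f y :=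
      funext hpdg
    simp only [pd2]
    rw [heqg]
    simp only [pd]
    exact hmul.deriv
  have h0 := hfinal.symm.trans hstep1
  linear_combination h0
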